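/- In a category where each object is a sifted colimit of its canonical diagram of free finitely generated objects, every morphism of ffg-Elgot algebras is an F-algebra homomorphism: if h : A → B satisfies (h • e)‡ = h ∘ e† for all ffg-equations e : X → FX + A, then h ∘ a = b ∘ Fh. -/

import Mathlib

open CategoryTheory CategoryTheory.Limits Opposite

universe v u

variable {C : Type u} [Category.{v} C] [HasBinaryCoproducts C]

/-- `h • e`, renaming of parameters in an equation morphism. -/
noncomputable def bullet (F : C ⥤ C) {X A B : C} (e : X ⟶ F.obj X ⨿ A) (h : A ⟶ B) :
    X ⟶ F.obj X ⨿ B :=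
  e ≫ coprod.map (𝟙 (F.obj X)) h

/-- `e ▫ f`, the combination of two equation morphisms. -/
noncomputable def square (F : C ⥤ C) {X Y Z : C} (e : X ⟶ F.obj X ⨿ Y)
    (f : Y ⟶ F.obj Y ⨿ Z) : X ⨿ Y ⟶ F.obj (X ⨿ Y) ⨿ Z :=
  coprod.desc e coprod.inr ≫ coprod.map (𝟙 (F.obj X)) f ≫
    coprod.desc (F.map coprod.inl ≫ coprod.inl) (coprod.map (F.map coprod.inr) (𝟙 Z))

/-- `w ▫ c`, combining an equation `w : X ⟶ FX + V` with a coalgebra `c : V ⟶ FV`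
into a coalgebra on `X + V`. -/
noncomputable def squareC (F : C ⥤ C) {X V : C} (w : X ⟶ F.obj X ⨿ V) (c : V ⟶ F.obj V) :
    X ⨿ V ⟶ F.obj (X ⨿ V) :=
  coprod.desc w coprod.inr ≫ coprod.map (𝟙 (F.obj X)) c ≫
    coprod.desc (F.map coprod.inl) (F.map coprod.inr)

/-- The type of solution operators on `A`, assigning morphisms to ffg-equations. -/
abbrev SolOp (F : C ⥤ C) (FFG : C → Prop) (A : C) : Type _ :=
  ∀ ⦃X : C⦄, FFG X → (X ⟶ F.obj X ⨿ A) → (X ⟶ A)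

/-- `(A, a, sol)` is an ffg-Elgot algebra: `sol` assigns to every ffg-equation a solution,
subject to Weak Functoriality and Compositionality. -/
structure IsSolutionOp (F : C ⥤ C) (FFG : C → Prop) {A : C} (a : F.obj A ⟶ A)
    (sol : SolOp F FFG A) : Prop where
  solves : ∀ {X : C} (hX : FFG X) (e : X ⟶ F.obj X ⨿ A),
    sol hX e = e ≫ coprod.map (F.map (sol hX e)) (𝟙 A) ≫ coprod.desc a (𝟙 A)
  weakFunctorial : ∀ {X Y Z : C} (hX : FFG X) (hY : FFG Y), FFG Z →
    ∀ (e : X ⟶ F.obj X ⨿ Z) (f : Y ⟶ F.obj Y ⨿ Z) (m : X ⟶ Y),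
      e ≫ coprod.map (F.map m) (𝟙 Z) = m ≫ f →
      ∀ h : Z ⟶ A, sol hX (bullet F e h) = m ≫ sol hY (bullet F f h)
  compositional : ∀ {X Y : C} (hX : FFG X) (hY : FFG Y) (hXY : FFG (X ⨿ Y))
    (e : X ⟶ F.obj X ⨿ Y) (f : Y ⟶ F.obj Y ⨿ A),
      sol hX (bullet F e (sol hY f)) = coprod.inl ≫ sol hXY (square F e f)

/-- `h : A ⟶ B` preserves solutions. -/
def SolPres (F : C ⥤ C) (FFG : C → Prop) {A B : C}
    (solA : SolOp F FFG A) (solB : SolOp F FFG B) (h : A ⟶ B) : Prop :=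
  ∀ ⦃X : C⦄ (hX : FFG X) (e : X ⟶ F.obj X ⨿ A),
    solB hX (bullet F e h) = solA hX e ≫ h

/-- The category of `F`-coalgebras with carrier satisfying `FFG`. -/
abbrev FFGCoalg (F : C ⥤ C) (FFG : C → Prop) : Type _ :=
  ObjectProperty.FullSubcategory (fun c : Endofunctor.Coalgebra F => FFG c.V)

/-- The inclusion diagram of ffg-carried coalgebras into `C`. -/
noncomputable def coalgDiagram (F : C ⥤ C) (FFG : C → Prop) : FFGCoalg F FFG ⥤ C :=
  ObjectProperty.ι _ ⋙ Endofunctor.Coalgebra.forget F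

/-- The canonical diagram of ffg objects over `A`. -/
noncomputable def canonicalDiagram (FFG : C → Prop) (A : C) :
    ObjectProperty.FullSubcategory (fun p : Over A => FFG p.left) ⥤ C :=
  ObjectProperty.ι _ ⋙ Over.forget A

/-- The canonical cocone on the canonical diagram of ffg objects over `A`. -/
noncomputable def canonicalCocone (FFG : C → Prop) (A : C) :
    Cocone (canonicalDiagram FFG A) where
  pt := A
  ι :=
    { app := fun p => p.obj.hom
      naturality := by
        intro p q f
        simp only [canonicalDiagram, Functor.comp_map, Functor.const_obj_obj,
          Functor.const_obj_map, Category.comp_id]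
        simpa using Over.w f.hom }

/-- The endofunctor `F(-) + Y`. -/
noncomputable def withParam (F : C ⥤ C) (Y : C) : C ⥤ C where
  obj X := F.obj X ⨿ Y
  map f := coprod.map (F.map f) (𝟙 Y)
  map_id := by intros; simp
  map_comp := by intros; simp

/- A single ffg-equation forces solution preservation to see the structure maps: in the equation
`[g ≫ F inr ≫ inl, f ≫ inr]` on `Z ⨿ X` the variables of `X` are set to the constants `f`, so its
solution on `Z` is `g ≫ F f ≫ a`. Comparing this for `A` and `B` gives `a ≫ h = F h ≫ b` after
precomposition with `g ≫ F f`; the canonical colimit at `F X` removes `g`, and `F` preserving the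
canonical colimit at `A` removes `F f`. -/

section ConstantEquations

variable (F : C ⥤ C) {FFG : C → Prop}

noncomputable def constEq {X Z A : C} (g : Z ⟶ F.obj X) (f : X ⟶ A) :
    Z ⨿ X ⟶ F.obj (Z ⨿ X) ⨿ A :=
  coprod.desc (g ≫ F.map coprod.inr ≫ coprod.inl) (f ≫ coprod.inr)

theorem bullet_constEq {X Z A B : C} (g : Z ⟶ F.obj X) (f : X ⟶ A) (h : A ⟶ B) :
    bullet F (constEq F g f) h = constEq F g (f ≫ h) := by
  ext <;> simp [bullet, constEq]

theorem inl_comp_eq_of_solves_constEq {X Z A : C} (a : F.obj A ⟶ A) (g : Z ⟶ F.obj X)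
    (f : X ⟶ A) {s : Z ⨿ X ⟶ A}
    (hs : s = constEq F g f ≫ coprod.map (F.map s) (𝟙 A) ≫ coprod.desc a (𝟙 A)) :
    coprod.inl ≫ s = g ≫ F.map f ≫ a := by
  have hr : coprod.inr ≫ s = f := by
    rw [hs, constEq, coprod.inr_desc_assoc, Category.assoc, coprod.inr_map_assoc,
      coprod.inr_desc, Category.id_comp, Category.comp_id]
  have hl : coprod.inl ≫ s = g ≫ F.map (coprod.inr ≫ s) ≫ a := by
    conv_lhs => rw [hs, constEq, coprod.inl_desc_assoc]
    simp only [Category.assoc, coprod.inl_map_assoc, coprod.inl_desc, Functor.map_comp]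
  rw [hl, hr]

theorem SolPres.comp_map_comp_eq {A B : C} {a : F.obj A ⟶ A} {b : F.obj B ⟶ B}
    {solA : SolOp F FFG A} {solB : SolOp F FFG B}
    (hA : IsSolutionOp F FFG a solA) (hB : IsSolutionOp F FFG b solB)
    {h : A ⟶ B} (hpres : SolPres F FFG solA solB h)
    {X Z : C} (hZX : FFG (Z ⨿ X)) (g : Z ⟶ F.obj X) (f : X ⟶ A) :
    g ≫ F.map f ≫ a ≫ h = g ≫ F.map f ≫ F.map h ≫ b := calc
  g ≫ F.map f ≫ a ≫ h = (coprod.inl ≫ solA hZX (constEq F g f)) ≫ h := by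
    rw [inl_comp_eq_of_solves_constEq F a g f (hA.solves hZX _)]
    simp
  _ = coprod.inl ≫ solB hZX (constEq F g (f ≫ h)) := by
    rw [Category.assoc, ← hpres, bullet_constEq]
  _ = g ≫ F.map f ≫ F.map h ≫ b := by
    rw [inl_comp_eq_of_solves_constEq F b g _ (hB.solves hZX _)]
    simp

end ConstantEquations

omit [HasBinaryCoproducts C] in
theorem canonicalCocone_hom_ext {FFG : C → Prop} {Y W : C}
    (hY : IsColimit (canonicalCocone FFG Y)) {u v : Y ⟶ W}
    (huv : ∀ ⦃Z : C⦄, FFG Z → ∀ g : Z ⟶ Y, g ≫ u = g ≫ v) : u = v :=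
  hY.hom_ext fun j => huv j.property j.obj.hom

omit [HasBinaryCoproducts C] in
theorem map_canonicalCocone_hom_ext (F : C ⥤ C) {FFG : C → Prop} {Y W : C}
    [PreservesColimit (canonicalDiagram FFG Y) F]
    (hY : IsColimit (canonicalCocone FFG Y)) {u v : F.obj Y ⟶ W}
    (huv : ∀ ⦃Z : C⦄, FFG Z → ∀ g : Z ⟶ Y, F.map g ≫ u = F.map g ≫ v) : u = v :=
  (isColimitOfPreserves F hY).hom_ext fun j => huv j.property j.obj.hom

theorem solutionPreserving_is_algebraHom_general
    (F : C ⥤ C) (FFG : C → Prop)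
    -- every object is the (sifted) colimit of its canonical diagram of ffg objects
    (hcan : ∀ A : C, Nonempty (IsColimit (canonicalCocone FFG A)))
    -- F preserves these sifted colimits
    (hF : ∀ A : C, Nonempty
      (PreservesColimitsOfShape (ObjectProperty.FullSubcategory (fun p : Over A => FFG p.left)) F))
    -- ffg objects are closed under binary coproducts
    (hcop : ∀ {X Y : C}, FFG X → FFG Y → FFG (X ⨿ Y))
    {A B : C} (a : F.obj A ⟶ A) (b : F.obj B ⟶ B)
    (solA : SolOp F FFG A) (solB : SolOp F FFG B)
    (hA : IsSolutionOp F FFG a solA) (hB : IsSolutionOp F FFG b solB)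
    (h : A ⟶ B) (hpres : SolPres F FFG solA solB h) :
    a ≫ h = F.map h ≫ b := by
  obtain ⟨_⟩ := hF A
  refine map_canonicalCocone_hom_ext F (hcan A).some fun X hX f => ?_
  refine canonicalCocone_hom_ext (hcan (F.obj X)).some fun Z hZ g => ?_
  simpa using hpres.comp_map_comp_eq F hA hB (hcop hZ hX) g f

/-- Every morphism of ffg-Elgot algebras is an F-algebra homomorphism
(in a variety, where every object is the sifted colimit of its canonical diagram of
ffg objects and `F` preserves sifted colimits). -/
theorem solutionPreserving_is_algebraHom
    (F : C ⥤ C) (FFG : C → Prop)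
    -- every object is the (sifted) colimit of its canonical diagram of ffg objects
    (hcan : ∀ A : C, Nonempty (IsColimit (canonicalCocone FFG A)))
    (hsift : ∀ A : C, IsSifted (ObjectProperty.FullSubcategory (fun p : Over A => FFG p.left)))
    -- F preserves these sifted colimits
    (hF : ∀ A : C, Nonempty
      (PreservesColimitsOfShape (ObjectProperty.FullSubcategory (fun p : Over A => FFG p.left)) F))
    -- ffg objects are closed under binary coproducts
    (hcop : ∀ {X Y : C}, FFG X → FFG Y → FFG (X ⨿ Y))
    {A B : C} (a : F.obj A ⟶ A) (b : F.obj B ⟶ B)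
    (solA : SolOp F FFG A) (solB : SolOp F FFG B)
    (hA : IsSolutionOp F FFG a solA) (hB : IsSolutionOp F FFG b solB)
    (h : A ⟶ B) (hpres : SolPres F FFG solA solB h) :
    a ≫ h = F.map h ≫ b :=
  solutionPreserving_is_algebraHom_general F FFG hcan hF hcop a b solA solB hA hB h hpres
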